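/- If every eigenvalue of V is at least λ₀ and λ₀ ≥ max(1, L²), then for every t ≥ 1, Σ_{k=1}^t ‖m_{k-1}‖²_{V̄_{k-1}^{-1}} ≤ 2 log( det(V̄_t) / det(V) ). -/

import Mathlib

/-!
By the matrix determinant lemma, `det V̄ₖ₊₁ = det V̄ₖ · (1 + xₖ)` with
`xₖ = ‖mₖ‖²_{V̄ₖ⁻¹}`, so `log (det V̄ₜ / det V) = ∑ₖ log (1 + xₖ)`.
Since `V̄ₖ ⪰ V ⪰ λ₀ I`, we get `λ₀ xₖ ≤ ‖mₖ‖² ≤ L² ≤ λ₀`, so `0 ≤ xₖ ≤ 1`,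
and `x ≤ 2 log (1 + x)` on `[0, 2]`.
-/

open Matrix Finset

theorem Finset.sum_Icc_one_sub_one {M : Type*} [AddCommMonoid M] (f : ℕ → M) (t : ℕ) :
    ∑ k ∈ Icc 1 t, f (k - 1) = ∑ k ∈ range t, f k := by
  induction t with
  | zero => simp
  | succ t ih => rw [sum_Icc_succ_top (by omega), ih, sum_range_succ, Nat.add_sub_cancel]

theorem Real.le_two_mul_log_one_add {x : ℝ} (hx₀ : 0 ≤ x) (hx₂ : x ≤ 2) :
    x ≤ 2 * Real.log (1 + x) := by
  have h := Real.le_log_one_add_of_nonneg hx₀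
  rw [div_le_iff₀ (by linarith)] at h
  nlinarith

section

variable {n : Type*} [Fintype n]

theorem Matrix.det_add_vecMulVec [DecidableEq n] {R : Type*} [CommRing R] {A : Matrix n n R}
    (hA : IsUnit A.det) (u v : n → R) :
    (A + vecMulVec u v).det = A.det * (1 + v ⬝ᵥ (A⁻¹ *ᵥ u)) := by
  rw [vecMulVec_eq Unit, det_add_replicateCol_mul_replicateRow hA, det_unique (1 + _), add_apply,
    one_apply_eq, Matrix.mul_assoc, ← replicateCol_mulVec, replicateRow_mul_replicateCol_apply]

theorem Matrix.PosDef.mul_dotProduct_inv_mulVec_le [DecidableEq n] {A : Matrix n n ℝ}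
    (hA : A.PosDef) {c : ℝ} (hc₀ : 0 ≤ c) (hc : ∀ x, c * (x ⬝ᵥ x) ≤ x ⬝ᵥ (A *ᵥ x)) (v : n → ℝ) :
    c * (v ⬝ᵥ (A⁻¹ *ᵥ v)) ≤ v ⬝ᵥ v := by
  set y := A⁻¹ *ᵥ v
  have hAy : A *ᵥ y = v := by
    rw [mulVec_mulVec, mul_nonsing_inv _ hA.det_pos.ne'.isUnit, one_mulVec]
  have hq : v ⬝ᵥ y = y ⬝ᵥ (A *ᵥ y) := by rw [hAy, dotProduct_comm]
  -- expand `0 ≤ ‖v - c • y‖²` and use `c ‖y‖² ≤ yᵀ A y = vᵀ y`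
  have hsq : 0 ≤ (v - c • y) ⬝ᵥ (v - c • y) := by
    simpa using dotProduct_star_self_nonneg (v - c • y)
  have hcy := mul_le_mul_of_nonneg_left (hc y) hc₀
  simp only [sub_dotProduct, dotProduct_sub, smul_dotProduct, dotProduct_smul, smul_eq_mul] at hsq
  rw [dotProduct_comm y v] at hsq
  rw [← hq] at hcy
  linarith

end

section

variable {n : Type*}

def regularizedGram (V : Matrix n n ℝ) (m : ℕ → n → ℝ) (t : ℕ) : Matrix n n ℝ :=
  V + ∑ k ∈ range t, vecMulVec (m k) (m k)

variable {V : Matrix n n ℝ} (m : ℕ → n → ℝ)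

@[simp]
theorem regularizedGram_zero : regularizedGram V m 0 = V := by
  simp [regularizedGram]

theorem regularizedGram_succ (t : ℕ) :
    regularizedGram V m (t + 1) = regularizedGram V m t + vecMulVec (m t) (m t) := by
  rw [regularizedGram, regularizedGram, sum_range_succ, add_assoc]

theorem regularizedGram_eq_add_sum_Icc (t : ℕ) :
    V + ∑ k ∈ Icc 1 t, vecMulVec (m (k - 1)) (m (k - 1)) = regularizedGram V m t := by
  rw [sum_Icc_one_sub_one (fun k ↦ vecMulVec (m k) (m k)), regularizedGram]

variable [Fintype n]

theorem posDef_regularizedGram (hV : V.PosDef) (t : ℕ) : (regularizedGram V m t).PosDef :=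
  hV.add_posSemidef <| posSemidef_sum _ fun k _ ↦ by
    simpa using posSemidef_vecMulVec_self_star (m k)

theorem le_dotProduct_regularizedGram_mulVec {c : ℝ}
    (hc : ∀ x, c * (x ⬝ᵥ x) ≤ x ⬝ᵥ (V *ᵥ x)) (t : ℕ) (x : n → ℝ) :
    c * (x ⬝ᵥ x) ≤ x ⬝ᵥ (regularizedGram V m t *ᵥ x) := by
  have hsum := (posSemidef_sum (range t) fun k _ ↦ by
    simpa using posSemidef_vecMulVec_self_star (m k)).dotProduct_mulVec_nonneg x
  rw [regularizedGram, add_mulVec, dotProduct_add]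
  simp only [star_trivial] at hsum
  linarith [hc x]

variable [DecidableEq n]

theorem det_regularizedGram_div_det (hV : V.PosDef) (t : ℕ) :
    (regularizedGram V m t).det / V.det =
      ∏ k ∈ range t, (1 + m k ⬝ᵥ ((regularizedGram V m k)⁻¹ *ᵥ m k)) := by
  induction t with
  | zero => simp [div_self hV.det_pos.ne']
  | succ t ih =>
    rw [prod_range_succ, ← ih, regularizedGram_succ,
      det_add_vecMulVec (posDef_regularizedGram m hV t).det_pos.ne'.isUnit, mul_div_right_comm]

theorem sum_dotProduct_inv_regularizedGram_le_two_mul_log (hV : V.PosDef)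
    (hm : ∀ k, m k ⬝ᵥ ((regularizedGram V m k)⁻¹ *ᵥ m k) ≤ 2) (t : ℕ) :
    ∑ k ∈ range t, m k ⬝ᵥ ((regularizedGram V m k)⁻¹ *ᵥ m k) ≤
      2 * Real.log ((regularizedGram V m t).det / V.det) := by
  have hnonneg k : 0 ≤ m k ⬝ᵥ ((regularizedGram V m k)⁻¹ *ᵥ m k) :=
    (posDef_regularizedGram m hV k).inv.posSemidef.dotProduct_mulVec_nonneg (m k)
  rw [det_regularizedGram_div_det m hV, Real.log_prod fun k _ ↦ by linarith [hnonneg k], mul_sum]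
  exact sum_le_sum fun k _ ↦ Real.le_two_mul_log_one_add (hnonneg k) (hm k)

end

theorem stmt7_general {d : ℕ} (V : Matrix (Fin d) (Fin d) ℝ) (hV : V.PosDef)
    (m : ℕ → Fin d → ℝ) (L lam0 : ℝ) (hmL : ∀ k, Real.sqrt (m k ⬝ᵥ m k) ≤ L)
    (hlam0 : ∀ x : Fin d → ℝ, lam0 * (x ⬝ᵥ x) ≤ x ⬝ᵥ (V *ᵥ x))
    (hlam0' : max 1 (L ^ 2) ≤ lam0)
    (t : ℕ) :
    (∑ k ∈ Finset.Icc 1 t,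
        m (k - 1) ⬝ᵥ
          ((V + ∑ j ∈ Finset.Icc 1 (k - 1), vecMulVec (m (j - 1)) (m (j - 1)))⁻¹ *ᵥ
            m (k - 1)))
      ≤ 2 * Real.log ((V + ∑ k ∈ Finset.Icc 1 t,
          vecMulVec (m (k - 1)) (m (k - 1))).det / V.det) := by
  have hlam0_pos : 0 < lam0 := lt_of_lt_of_le one_pos (le_of_max_le_left hlam0')
  have hstep k : m k ⬝ᵥ ((regularizedGram V m k)⁻¹ *ᵥ m k) ≤ 1 := by
    have hq := (posDef_regularizedGram m hV k).mul_dotProduct_inv_mulVec_le hlam0_pos.le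
      (le_dotProduct_regularizedGram_mulVec m hlam0 k) (m k)
    have hmk : m k ⬝ᵥ m k ≤ lam0 :=
      (Real.sqrt_le_iff.mp (hmL k)).2.trans (le_of_max_le_right hlam0')
    exact (mul_le_iff_le_one_right hlam0_pos).mp (hq.trans hmk)
  simp only [regularizedGram_eq_add_sum_Icc]
  rw [sum_Icc_one_sub_one (fun k ↦ m k ⬝ᵥ ((regularizedGram V m k)⁻¹ *ᵥ m k))]
  exact sum_dotProduct_inv_regularizedGram_le_two_mul_log m hV
    (fun k ↦ (hstep k).trans one_le_two) t

/-- If every eigenvalue of `V` is at least `λ₀` and `λ₀ ≥ max(1, L²)`, then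
`∑_{k=1}^t ‖m_{k-1}‖²_{V̄_{k-1}⁻¹} ≤ 2 log(det(V̄_t)/det(V))`. -/
theorem stmt7 {d : ℕ} (V : Matrix (Fin d) (Fin d) ℝ) (hV : V.PosDef)
    (m : ℕ → Fin d → ℝ) (L lam0 : ℝ) (hmL : ∀ k, Real.sqrt (m k ⬝ᵥ m k) ≤ L)
    (hlam0 : ∀ x : Fin d → ℝ, lam0 * (x ⬝ᵥ x) ≤ x ⬝ᵥ (V *ᵥ x))
    (hlam0' : max 1 (L ^ 2) ≤ lam0)
    (t : ℕ) (ht : 1 ≤ t) :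
    (∑ k ∈ Finset.Icc 1 t,
        m (k - 1) ⬝ᵥ
          ((V + ∑ j ∈ Finset.Icc 1 (k - 1), vecMulVec (m (j - 1)) (m (j - 1)))⁻¹ *ᵥ
            m (k - 1)))
      ≤ 2 * Real.log ((V + ∑ k ∈ Finset.Icc 1 t,
          vecMulVec (m (k - 1)) (m (k - 1))).det / V.det) :=
  stmt7_general V hV m L lam0 hmL hlam0 hlam0' t
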